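/- Let 𝒜 be a finite nonempty set, μ a translation invariant probability measure on 𝒜^ℤ, and m ≥ k ≥ 1 integers. With G_k = 2^k ℤ and G_k^− = {j · 2^k : j < 0}, the conditional entropies satisfy S( {0} | G_m^− ) ≥ S( {2^{k−1}} | ({2^{k−1}} + G_k^−) ∪ G_k ), where conditional entropies with infinite conditioning sets are the limits over growing finite windows. -/
import Mathlib


open MeasureTheory Real Filter Pointwise

/-- Probability of the cylinder set determined by the configuration `x` on the finite
set `Λ ⊆ ℤ`. -/
noncomputable def cylProb1 {𝒜 : Type*} [MeasurableSpace 𝒜]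
    (μ : Measure (ℤ → 𝒜)) (Λ : Finset ℤ) (x : Λ → 𝒜) : ℝ :=
  (μ {ω | ∀ v : Λ, ω v.1 = x v}).toReal

/-- The entropy `S(Λ)` of a finite set of sites `Λ ⊆ ℤ` with respect to `μ`. -/
noncomputable def entS1 {𝒜 : Type*} [Fintype 𝒜] [MeasurableSpace 𝒜]
    (μ : Measure (ℤ → 𝒜)) (Λ : Finset ℤ) : ℝ :=
  -∑ x : (Λ → 𝒜), cylProb1 μ Λ x * Real.log (cylProb1 μ Λ x)

/-- The conditional entropy `S(Λ | Λ')` (terms with zero probability vanish since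
`Real.log 0 = 0` and `0 * log 0 = 0`). -/
noncomputable def condEnt1 {𝒜 : Type*} [Fintype 𝒜] [MeasurableSpace 𝒜]
    (μ : Measure (ℤ → 𝒜)) (Λ Λ' : Finset ℤ) : ℝ :=
  -∑ x : ((Λ ∪ Λ' : Finset ℤ) → 𝒜),
      cylProb1 μ (Λ ∪ Λ') x *
        Real.log (cylProb1 μ (Λ ∪ Λ') x /
          cylProb1 μ Λ' (fun v => x ⟨v.1, Finset.mem_union_right Λ v.2⟩))

/-- `μ` is translation invariant: it is preserved by the shift `σ`, `(σx)(i) = x(i+1)`. -/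
def TransInv1 {𝒜 : Type*} [MeasurableSpace 𝒜] (μ : Measure (ℤ → 𝒜)) : Prop :=
  μ.map (fun ω (i : ℤ) => ω (i + 1)) = μ

open Classical in
/-- The finite set `Λ' ∩ [-n, n]` for a (possibly infinite) `Λ' ⊆ ℤ`. -/
noncomputable def interBox1 (Λ' : Set ℤ) (n : ℕ) : Finset ℤ :=
  (Finset.Icc (-(n : ℤ)) (n : ℤ)).filter (· ∈ Λ')

set_option linter.unusedSectionVars false
set_option linter.unusedVariables false

section Helpers

variable {𝒜 : Type*} [Fintype 𝒜] [MeasurableSpace 𝒜] [MeasurableSingletonClass 𝒜]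

lemma measurable_cylSet (Λ : Finset ℤ) (x : Λ → 𝒜) :
    MeasurableSet {ω : ℤ → 𝒜 | ∀ v : Λ, ω v.1 = x v} := by
  have h : {ω : ℤ → 𝒜 | ∀ v : Λ, ω v.1 = x v}
      = ⋂ v : Λ, (fun ω : ℤ → 𝒜 => ω v.1) ⁻¹' {x v} := by
    ext ω; simp
  rw [h]
  exact MeasurableSet.iInter fun v => (measurable_pi_apply v.1) (measurableSet_singleton _)

lemma cylProb_nonneg (μ : Measure (ℤ → 𝒜)) (Λ : Finset ℤ) (x : Λ → 𝒜) :
    0 ≤ cylProb1 μ Λ x := ENNReal.toReal_nonneg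

lemma cylProb_restrict_le (μ : Measure (ℤ → 𝒜)) [IsProbabilityMeasure μ]
    {Λ Λ'' : Finset ℤ} (h : Λ ⊆ Λ'') (x : Λ'' → 𝒜) :
    cylProb1 μ Λ'' x ≤ cylProb1 μ Λ (fun v => x ⟨v.1, h v.2⟩) := by
  apply ENNReal.toReal_mono (measure_ne_top μ _)
  apply measure_mono
  intro ω hω v
  exact hω ⟨v.1, h v.2⟩

lemma cylProb_marginal (μ : Measure (ℤ → 𝒜)) [IsProbabilityMeasure μ]
    {Λ Λ'' : Finset ℤ} (h : Λ ⊆ Λ'') (y : Λ → 𝒜)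
    (t : Finset (↥Λ'' → 𝒜))
    (ht : ∀ x, x ∈ t ↔ (fun v : ↥Λ => x ⟨v.1, h v.2⟩) = y) :
    cylProb1 μ Λ y = ∑ x ∈ t, cylProb1 μ Λ'' x := by
  have hE : {ω : ℤ → 𝒜 | ∀ v : ↥Λ, ω v.1 = y v} =
      ⋃ x ∈ t, {ω : ℤ → 𝒜 | ∀ v : ↥Λ'', ω v.1 = x v} := by
    ext ω
    simp only [Set.mem_setOf_eq, Set.mem_iUnion]
    constructor
    · intro hω
      refine ⟨fun v => ω v.1, ⟨(ht _).2 ?_, fun v => rfl⟩⟩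
      funext v; exact hω v
    · rintro ⟨x, hxt, hωx⟩ v
      have h1 := congrFun ((ht x).1 hxt) v
      exact (hωx ⟨v.1, h v.2⟩).trans h1
  have hdisj : (t : Set (↥Λ'' → 𝒜)).PairwiseDisjoint
      (fun x => {ω : ℤ → 𝒜 | ∀ v : ↥Λ'', ω v.1 = x v}) := by
    intro x _ x' _ hne
    rw [Function.onFun, Set.disjoint_left]
    intro ω hω hω'
    exact hne (funext fun v => (hω v).symm.trans (hω' v))
  unfold cylProb1
  rw [hE, measure_biUnion_finset hdisj (fun x _ => measurable_cylSet Λ'' x),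
    ENNReal.toReal_sum (fun x _ => measure_ne_top μ _)]

end Helpers

lemma sum_mul_log_div_ge {ι : Type*} (s : Finset ι) (a b : ι → ℝ)
    (ha : ∀ i ∈ s, 0 ≤ a i) (hb : ∀ i ∈ s, 0 ≤ b i) (hab : ∀ i ∈ s, a i ≤ b i) :
    (∑ i ∈ s, a i) * Real.log ((∑ i ∈ s, a i) / (∑ i ∈ s, b i)) ≤
      ∑ i ∈ s, a i * Real.log (a i / b i) := by
  set A := ∑ i ∈ s, a i with hA
  set B := ∑ i ∈ s, b i with hB
  have hA0 : 0 ≤ A := Finset.sum_nonneg ha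
  have hAB : A ≤ B := Finset.sum_le_sum hab
  rcases eq_or_lt_of_le hA0 with h0 | hApos
  · have hz : ∀ i ∈ s, a i = 0 :=
      (Finset.sum_eq_zero_iff_of_nonneg ha).1 h0.symm
    have hrhs : ∑ i ∈ s, a i * Real.log (a i / b i) = 0 :=
      Finset.sum_eq_zero fun i hi => by rw [hz i hi, zero_mul]
    rw [hrhs, ← h0, zero_mul]
  · have hBpos : 0 < B := lt_of_lt_of_le hApos hAB
    have key : ∀ i ∈ s, a i - A * b i / B ≤
        a i * Real.log (a i / b i) - a i * Real.log (A / B) := by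
      intro i hi
      rcases eq_or_lt_of_le (ha i hi) with h0i | hai
      · rw [← h0i, zero_mul, zero_mul, zero_sub, sub_zero, neg_nonpos]
        exact div_nonneg (mul_nonneg hA0 (hb i hi)) hBpos.le
      · have hbi : 0 < b i := lt_of_lt_of_le hai (hab i hi)
        have hx : (0:ℝ) < (A / B) / (a i / b i) := div_pos (div_pos hApos hBpos) (div_pos hai hbi)
        have hlog := Real.log_le_sub_one_of_pos hx
        have hne1 : A / B ≠ 0 := (div_pos hApos hBpos).ne'
        have hne2 : a i / b i ≠ 0 := (div_pos hai hbi).ne'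
        rw [Real.log_div hne1 hne2] at hlog
        have hmul := mul_le_mul_of_nonneg_left hlog (le_of_lt hai)
        have hsimp : a i * ((A / B) / (a i / b i) - 1) = A * b i / B - a i := by
          field_simp
        rw [hsimp, mul_sub] at hmul
        linarith
    have hsum := Finset.sum_le_sum key
    rw [Finset.sum_sub_distrib, Finset.sum_sub_distrib, ← Finset.sum_mul, ← hA] at hsum
    have e1 : ∑ i ∈ s, A * b i / B = A := by
      have : ∀ i ∈ s, A * b i / B = (A / B) * b i := fun i _ => by ring
      rw [Finset.sum_congr rfl this, ← Finset.mul_sum, ← hB]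
      field_simp
    rw [e1] at hsum
    linarith

section Ent

variable {𝒜 : Type*} [Fintype 𝒜] [MeasurableSpace 𝒜] [MeasurableSingletonClass 𝒜]
  (μ : Measure (ℤ → 𝒜)) [IsProbabilityMeasure μ]

lemma condEnt_nonneg (Λ Λ' : Finset ℤ) : 0 ≤ condEnt1 μ Λ Λ' := by
  unfold condEnt1
  rw [neg_nonneg]
  apply Finset.sum_nonpos
  intro x _
  have hp : 0 ≤ cylProb1 μ (Λ ∪ Λ') x := cylProb_nonneg μ _ _
  have hpq := cylProb_restrict_le μ (Finset.subset_union_right : Λ' ⊆ Λ ∪ Λ') x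
  rcases eq_or_lt_of_le hp with h0 | hpos
  · rw [← h0, zero_mul]
  · have hq : 0 < cylProb1 μ Λ' (fun v => x ⟨v.1, Finset.mem_union_right Λ v.2⟩) :=
      lt_of_lt_of_le hpos hpq
    have hlog : Real.log (cylProb1 μ (Λ ∪ Λ') x /
        cylProb1 μ Λ' (fun v => x ⟨v.1, Finset.mem_union_right Λ v.2⟩)) ≤ 0 :=
      Real.log_nonpos (div_nonneg hp hq.le) ((div_le_one hq).2 hpq)
    exact mul_nonpos_iff.2 (Or.inl ⟨hp, hlog⟩)

lemma condEnt_antitone {Λ Λ' Λ'' : Finset ℤ} (hsub : Λ' ⊆ Λ'') (hdis : Disjoint Λ Λ'') :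
    condEnt1 μ Λ Λ'' ≤ condEnt1 μ Λ Λ' := by
  classical
  unfold condEnt1
  rw [neg_le_neg_iff]
  have hUW : Λ ∪ Λ' ⊆ Λ ∪ Λ'' := Finset.union_subset_union_right hsub
  set g : (↥(Λ ∪ Λ'') → 𝒜) → (↥(Λ ∪ Λ') → 𝒜) := fun x v => x ⟨v.1, hUW v.2⟩ with hg
  rw [← Finset.sum_fiberwise Finset.univ g
    (fun x => cylProb1 μ (Λ ∪ Λ'') x * Real.log (cylProb1 μ (Λ ∪ Λ'') x /
      cylProb1 μ Λ'' (fun v => x ⟨v.1, Finset.mem_union_right Λ v.2⟩)))]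
  apply Finset.sum_le_sum
  intro y _
  have hfib_a : cylProb1 μ (Λ ∪ Λ') y
      = ∑ x ∈ Finset.univ.filter (fun x => g x = y), cylProb1 μ (Λ ∪ Λ'') x :=
    cylProb_marginal μ hUW y _ (fun x => by simp [hg])
  have hfib_b : cylProb1 μ Λ' (fun v => y ⟨v.1, Finset.mem_union_right Λ v.2⟩)
      = ∑ x ∈ Finset.univ.filter (fun x => g x = y),
          cylProb1 μ Λ'' (fun v => x ⟨v.1, Finset.mem_union_right Λ v.2⟩) := by
    rw [cylProb_marginal μ hsub (fun v => y ⟨v.1, Finset.mem_union_right Λ v.2⟩)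
      (Finset.univ.filter (fun z : (↥Λ'' → 𝒜) =>
        (fun v : ↥Λ' => z ⟨v.1, hsub v.2⟩) = (fun v => y ⟨v.1, Finset.mem_union_right Λ v.2⟩)))
      (fun z => by simp)]
    refine Finset.sum_nbij'
      (i := fun z => fun w : ↥(Λ ∪ Λ'') => if hw : w.1 ∈ Λ then y ⟨w.1, Finset.mem_union_left Λ' hw⟩
        else z ⟨w.1, (Finset.mem_union.1 w.2).resolve_left hw⟩)
      (j := fun x => fun v : ↥Λ'' => x ⟨v.1, Finset.mem_union_right Λ v.2⟩)
      ?_ ?_ ?_ ?_ ?_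
    · intro z hz
      rw [Finset.mem_filter] at hz ⊢
      refine ⟨Finset.mem_univ _, ?_⟩
      funext w
      rcases Finset.mem_union.1 w.2 with hwΛ | hwΛ'
      · show (if hw : w.1 ∈ Λ then _ else _) = y w
        rw [dif_pos hwΛ]
      · by_cases hw : w.1 ∈ Λ
        · show (if hw' : w.1 ∈ Λ then _ else _) = y w
          rw [dif_pos hw]
        · show (if hw' : w.1 ∈ Λ then _ else _) = y w
          rw [dif_neg hw]
          exact congrFun hz.2 ⟨w.1, hwΛ'⟩
    · intro x hx
      rw [Finset.mem_filter] at hx ⊢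
      refine ⟨Finset.mem_univ _, ?_⟩
      funext v
      exact congrFun hx.2 ⟨v.1, Finset.mem_union_right Λ v.2⟩
    · intro z hz
      funext v
      show (if hw : v.1 ∈ Λ then _ else _) = z v
      rw [dif_neg (Finset.disjoint_right.1 hdis v.2)]
    · intro x hx
      rw [Finset.mem_filter] at hx
      funext w
      by_cases hw : w.1 ∈ Λ
      · show (if hw' : w.1 ∈ Λ then _ else _) = x w
        rw [dif_pos hw]
        exact (congrFun hx.2 ⟨w.1, Finset.mem_union_left Λ' hw⟩).symm
      · show (if hw' : w.1 ∈ Λ then _ else _) = x w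
        rw [dif_neg hw]
    · intro z hz
      congr 1
      funext v
      show z v = (if hw : v.1 ∈ Λ then _ else _)
      rw [dif_neg (Finset.disjoint_right.1 hdis v.2)]
  rw [hfib_a, hfib_b]
  exact sum_mul_log_div_ge _ _ _
    (fun x _ => cylProb_nonneg μ _ _)
    (fun x _ => cylProb_nonneg μ _ _)
    (fun x _ => cylProb_restrict_le μ (Finset.subset_union_right : Λ'' ⊆ Λ ∪ Λ'') x)

end Ent

section Shift

variable {𝒜 : Type*} [Fintype 𝒜] [MeasurableSpace 𝒜] [MeasurableSingletonClass 𝒜]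
  {μ : Measure (ℤ → 𝒜)} [IsProbabilityMeasure μ]

lemma measurable_shift (a : ℤ) :
    Measurable (fun (ω : ℤ → 𝒜) (i : ℤ) => ω (i + a)) :=
  measurable_pi_lambda _ fun i => measurable_pi_apply _

lemma map_shift_nat (hinv : TransInv1 μ) (a : ℕ) :
    μ.map (fun (ω : ℤ → 𝒜) (i : ℤ) => ω (i + (a : ℤ))) = μ := by
  induction a with
  | zero =>
      have h : (fun (ω : ℤ → 𝒜) (i : ℤ) => ω (i + ((0:ℕ) : ℤ))) = id := by
        funext ω i; simp
      rw [h, Measure.map_id]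
  | succ b ih =>
      have hcomp : (fun (ω : ℤ → 𝒜) (i : ℤ) => ω (i + ((b + 1 : ℕ) : ℤ)))
          = (fun (ω : ℤ → 𝒜) (i : ℤ) => ω (i + 1))
            ∘ (fun (ω : ℤ → 𝒜) (i : ℤ) => ω (i + (b : ℤ))) := by
        funext ω i
        show ω (i + ((b + 1 : ℕ) : ℤ)) = ω (i + 1 + (b : ℤ))
        congr 1
        push_cast
        ring
      rw [hcomp, ← Measure.map_map (measurable_shift 1) (measurable_shift (b : ℤ)), ih]
      exact hinv

lemma cylProb_shift (hinv : TransInv1 μ) (a : ℕ) {S S' : Finset ℤ}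
    (h : ∀ w : ℤ, w ∈ S' → w - (a : ℤ) ∈ S) (h' : ∀ v : ℤ, v ∈ S → v + (a : ℤ) ∈ S')
    (x : ↥S' → 𝒜) (y : ↥S → 𝒜)
    (hxy : ∀ w : ↥S', x w = y ⟨w.1 - (a : ℤ), h w.1 w.2⟩) :
    cylProb1 μ S' x = cylProb1 μ S y := by
  have hmap := map_shift_nat hinv a
  unfold cylProb1
  have hpre : (fun (ω : ℤ → 𝒜) (i : ℤ) => ω (i + (a : ℤ))) ⁻¹' {ω : ℤ → 𝒜 | ∀ v : ↥S, ω v.1 = y v}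
      = {ω : ℤ → 𝒜 | ∀ w : ↥S', ω w.1 = x w} := by
    ext ω
    simp only [Set.mem_preimage, Set.mem_setOf_eq]
    constructor
    · intro hω w
      have h1 := hω ⟨w.1 - (a : ℤ), h w.1 w.2⟩
      have h2 : w.1 - (a : ℤ) + (a : ℤ) = w.1 := by ring
      rw [h2] at h1
      rw [hxy w]
      exact h1
    · intro hω v
      have h1 := hω ⟨v.1 + (a : ℤ), h' v.1 v.2⟩
      rw [hxy ⟨v.1 + (a : ℤ), h' v.1 v.2⟩] at h1
      have h2 : (⟨v.1 + (a : ℤ) - (a : ℤ), h _ (h' v.1 v.2)⟩ : ↥S) = v :=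
        Subtype.ext (by ring)
      rw [h2] at h1
      exact h1
  conv_rhs => rw [← hmap]
  rw [Measure.map_apply (measurable_shift (a : ℤ)) (measurable_cylSet S y), hpre]

lemma condEnt_image_add (hinv : TransInv1 μ) (a : ℕ) (Λ Λ' : Finset ℤ) :
    condEnt1 μ (Λ.image (· + (a : ℤ))) (Λ'.image (· + (a : ℤ))) = condEnt1 μ Λ Λ' := by
  classical
  have hmem1 : ∀ w : ℤ, w ∈ Λ.image (· + (a : ℤ)) ∪ Λ'.image (· + (a : ℤ)) →
      w - (a : ℤ) ∈ Λ ∪ Λ' := by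
    intro w hw
    rcases Finset.mem_union.1 hw with hw | hw <;>
      · obtain ⟨u, hu, rfl⟩ := Finset.mem_image.1 hw
        simp only [add_sub_cancel_right]
        first
          | exact Finset.mem_union_left _ hu
          | exact Finset.mem_union_right _ hu
  have hmem2 : ∀ v : ℤ, v ∈ Λ ∪ Λ' →
      v + (a : ℤ) ∈ Λ.image (· + (a : ℤ)) ∪ Λ'.image (· + (a : ℤ)) := by
    intro v hv
    rcases Finset.mem_union.1 hv with hv | hv
    · exact Finset.mem_union_left _ (Finset.mem_image_of_mem _ hv)
    · exact Finset.mem_union_right _ (Finset.mem_image_of_mem _ hv)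
  have hmem3 : ∀ w : ℤ, w ∈ Λ'.image (· + (a : ℤ)) → w - (a : ℤ) ∈ Λ' := by
    intro w hw
    obtain ⟨u, hu, rfl⟩ := Finset.mem_image.1 hw
    simpa using hu
  have hmem4 : ∀ v : ℤ, v ∈ Λ' → v + (a : ℤ) ∈ Λ'.image (· + (a : ℤ)) :=
    fun v hv => Finset.mem_image_of_mem _ hv
  unfold condEnt1
  congr 1
  refine Fintype.sum_equiv
    ⟨fun x => fun v : ↥(Λ ∪ Λ') => x ⟨v.1 + (a : ℤ), hmem2 v.1 v.2⟩,
     fun y => fun w => y ⟨w.1 - (a : ℤ), hmem1 w.1 w.2⟩,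
     fun x => funext fun w => congrArg x (Subtype.ext (by simp)),
     fun y => funext fun v => congrArg y (Subtype.ext (by simp))⟩
    _ _ ?_
  intro x
  simp only [Equiv.coe_fn_mk]
  rw [cylProb_shift hinv a hmem1 hmem2 x (fun v => x ⟨v.1 + (a : ℤ), hmem2 v.1 v.2⟩)
      (fun w => congrArg x (Subtype.ext (by simp))),
    cylProb_shift hinv a hmem3 hmem4
      (fun v => x ⟨v.1, Finset.mem_union_right _ v.2⟩)
      (fun v => x ⟨v.1 + (a : ℤ), hmem2 v.1 (Finset.mem_union_right _ v.2)⟩)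
      (fun w => congrArg x (Subtype.ext (by simp)))]

end Shift

lemma mem_interBox1 {A : Set ℤ} {n : ℕ} {x : ℤ} :
    x ∈ interBox1 A n ↔ x ∈ Finset.Icc (-(n : ℤ)) (n : ℤ) ∧ x ∈ A := by
  unfold interBox1
  exact @Finset.mem_filter ℤ (· ∈ A) (Classical.decPred _) _ _

lemma interBox1_mono (A : Set ℤ) : Monotone (interBox1 A) := by
  intro n n' h
  classical
  apply Finset.filter_subset_filter
  apply Finset.Icc_subset_Icc <;> omega


/-- For a translation invariant probability measure `μ` on `𝒜^ℤ` and
`m ≥ k ≥ 1`, with `G_k = 2^k ℤ` and `G_k^- = {j·2^k : j < 0}`,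
`S({0} | G_m^-) ≥ S({2^{k−1}} | ({2^{k−1}} + G_k^-) ∪ G_k)`, where conditional entropies
with infinite conditioning sets are limits over growing finite windows. -/
theorem condEnt_hierarchical_inequality {𝒜 : Type*} [Fintype 𝒜] [Nonempty 𝒜]
    [MeasurableSpace 𝒜] [MeasurableSingletonClass 𝒜]
    (μ : Measure (ℤ → 𝒜)) [IsProbabilityMeasure μ] (hinv : TransInv1 μ)
    (m k : ℕ) (hk : 1 ≤ k) (hkm : k ≤ m) :
    ∃ L L' : ℝ,
      Filter.Tendsto
        (fun n : ℕ => condEnt1 μ {0}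
          (interBox1 {x : ℤ | ∃ j : ℤ, j < 0 ∧ x = j * 2 ^ m} n))
        Filter.atTop (nhds L) ∧
      Filter.Tendsto
        (fun n : ℕ => condEnt1 μ {(2 : ℤ) ^ (k - 1)}
          (interBox1
            ({x : ℤ | ∃ j : ℤ, j < 0 ∧ x = 2 ^ (k - 1) + j * 2 ^ k} ∪
              {x : ℤ | ∃ j : ℤ, x = j * 2 ^ k}) n))
        Filter.atTop (nhds L') ∧
      L' ≤ L := by
  classical
  set s : ℕ := 2 ^ (k - 1) with hs
  have hs' : (s : ℤ) = 2 ^ (k - 1) := by rw [hs]; push_cast; ring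
  set Gm : Set ℤ := {x : ℤ | ∃ j : ℤ, j < 0 ∧ x = j * 2 ^ m} with hGm
  set Big : Set ℤ := {x : ℤ | ∃ j : ℤ, j < 0 ∧ x = 2 ^ (k - 1) + j * 2 ^ k} ∪
      {x : ℤ | ∃ j : ℤ, x = j * 2 ^ k} with hBig
  set f : ℕ → ℝ := fun n => condEnt1 μ {0} (interBox1 Gm n) with hf
  set g : ℕ → ℝ := fun n => condEnt1 μ {(2 : ℤ) ^ (k - 1)} (interBox1 Big n) with hg2
  have hdisj0 : ∀ n, Disjoint ({0} : Finset ℤ) (interBox1 Gm n) := by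
    intro n
    rw [Finset.disjoint_left]
    intro x hx hmem
    rw [Finset.mem_singleton] at hx
    subst hx
    rw [mem_interBox1] at hmem
    obtain ⟨j, hj, hj2⟩ := hmem.2
    have := mul_neg_of_neg_of_pos hj (pow_pos (by norm_num : (0:ℤ) < 2) m)
    omega
  have hdisjs : ∀ n, Disjoint ({(2 : ℤ) ^ (k - 1)} : Finset ℤ) (interBox1 Big n) := by
    intro n
    rw [Finset.disjoint_left]
    intro x hx hmem
    rw [Finset.mem_singleton] at hx
    subst hx
    rw [mem_interBox1] at hmem
    rcases hmem.2 with ⟨j, hj, hj2⟩ | ⟨j, hj2⟩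
    · have := mul_neg_of_neg_of_pos hj (pow_pos (by norm_num : (0:ℤ) < 2) k)
      omega
    · have hpow2 : (2 : ℤ) ^ k = 2 ^ (k - 1) * 2 := by
        rw [← pow_succ, Nat.sub_add_cancel hk]
      rw [hpow2] at hj2
      have h1 : (2 : ℤ) ^ (k - 1) * 1 = 2 ^ (k - 1) * (2 * j) := by linear_combination hj2
      have h2 := mul_left_cancel₀ (pow_ne_zero (k - 1) (by norm_num : (2:ℤ) ≠ 0)) h1
      omega
  have hf_anti : Antitone f := fun n n' h =>
    condEnt_antitone μ (interBox1_mono Gm h) (hdisj0 n')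
  have hg_anti : Antitone g := fun n n' h =>
    condEnt_antitone μ (interBox1_mono Big h) (hdisjs n')
  have hf_bdd : BddBelow (Set.range f) := by
    refine ⟨0, ?_⟩
    rintro x ⟨n, rfl⟩
    exact condEnt_nonneg μ _ _
  have hg_bdd : BddBelow (Set.range g) := by
    refine ⟨0, ?_⟩
    rintro x ⟨n, rfl⟩
    exact condEnt_nonneg μ _ _
  refine ⟨⨅ n, f n, ⨅ n, g n, tendsto_atTop_ciInf hf_anti hf_bdd,
    tendsto_atTop_ciInf hg_anti hg_bdd, ?_⟩
  refine le_ciInf fun n => ?_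
  have hsub : (interBox1 Gm n).image (· + (s : ℤ)) ⊆ interBox1 Big (n + s) := by
    intro x hx
    obtain ⟨t, ht, rfl⟩ := Finset.mem_image.1 hx
    rw [mem_interBox1, Finset.mem_Icc] at ht
    obtain ⟨⟨ht1, ht2⟩, j, hj, rfl⟩ := ht
    rw [mem_interBox1, Finset.mem_Icc]
    have hs0 : (0 : ℤ) ≤ (s : ℤ) := Int.natCast_nonneg s
    refine ⟨⟨by push_cast; linarith, by push_cast; linarith⟩, ?_⟩
    left
    refine ⟨j * 2 ^ (m - k), mul_neg_of_neg_of_pos hj (pow_pos (by norm_num) _), ?_⟩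
    have hpow : (2 : ℤ) ^ (m - k) * 2 ^ k = 2 ^ m := by
      rw [← pow_add, Nat.sub_add_cancel hkm]
    rw [hs', mul_assoc, hpow]
    ring
  have hsing : ({(2 : ℤ) ^ (k - 1)} : Finset ℤ) = ({0} : Finset ℤ).image (· + (s : ℤ)) := by
    rw [Finset.image_singleton, zero_add, hs']
  calc ⨅ n', g n' ≤ g (n + s) := ciInf_le hg_bdd _
    _ ≤ condEnt1 μ {(2 : ℤ) ^ (k - 1)} ((interBox1 Gm n).image (· + (s : ℤ))) :=
        condEnt_antitone μ hsub (hdisjs (n + s))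
    _ = f n := by rw [hsing, condEnt_image_add hinv s {0} (interBox1 Gm n)]
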